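/- arXiv:1406.1484 — 5 statements merged into one kernel-verified Lean document; each statement's English description precedes it below -/
import Mathlib

section
/- With d_α(0,p) defined as the infimum of r>0 such that δ_{1/r}(p) lies in the Euclidean ball of radius α centered at the origin in ℍ¹ ≅ ℝ³, one has the explicit formula d_α(0,p) = √( (ρ_p² + √(ρ_p⁴ + 4α²z²)) / (2α²) ), where p=(x,y,z) and ρ_p = √(x²+y²). -/
open Real

abbrev H : Type := ℝ × ℝ × ℝ

noncomputable section

/-- Heisenberg group law on ℝ³. -/
def hmul (p q : H) : H :=
  (p.1 + q.1, p.2.1 + q.2.1, p.2.2 + q.2.2 + (p.1 * q.2.1 - p.2.1 * q.1) / 2)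

/-- Heisenberg inverse. -/
def hinv (p : H) : H := (-p.1, -p.2.1, -p.2.2)

/-- Heisenberg dilation. -/
def hdil (l : ℝ) (p : H) : H := (l * p.1, l * p.2.1, l ^ 2 * p.2.2)

/-- Horizontal norm ρ. -/
def rho (p : H) : ℝ := Real.sqrt (p.1 ^ 2 + p.2.1 ^ 2)

/-- d_α(0,p) as the infimum of r > 0 with δ_{1/r}(p) in the Euclidean ball of radius α. -/
def dInf (α : ℝ) (p : H) : ℝ :=
  sInf {r : ℝ | 0 < r ∧ (p.1 / r) ^ 2 + (p.2.1 / r) ^ 2 + (p.2.2 / r ^ 2) ^ 2 ≤ α ^ 2}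

lemma key (α x y z r : ℝ) (hα : 0 < α) (hr : 0 < r) :
    ((x/r)^2 + (y/r)^2 + (z/r^2)^2 ≤ α^2) ↔
      (x^2 + y^2 + Real.sqrt ((x^2+y^2)^2 + 4*α^2*z^2)) / (2*α^2) ≤ r^2 := by
  set A := x^2 + y^2 with hA'
  set s := Real.sqrt (A^2 + 4*α^2*z^2) with hs'
  have hA : 0 ≤ A := by positivity
  have hsnn : 0 ≤ s := Real.sqrt_nonneg _
  have hs2 : s^2 = A^2 + 4*α^2*z^2 := Real.sq_sqrt (by positivity)
  have ht : 0 < r^2 := by positivity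
  have h1 : (x/r)^2 + (y/r)^2 + (z/r^2)^2 ≤ α^2 ↔ A*r^2 + z^2 ≤ α^2 * r^4 := by
    have he : (x/r)^2 + (y/r)^2 + (z/r^2)^2 = (A*r^2 + z^2)/r^4 := by
      field_simp
      ring
    rw [he, div_le_iff₀ (by positivity)]
  rw [h1, div_le_iff₀ (by positivity)]
  constructor
  · intro h
    have h2 : (0:ℝ) ≤ 2*α^2*r^2 - A := by nlinarith [sq_nonneg z]
    have hsq : A^2 + 4*α^2*z^2 ≤ (2*α^2*r^2 - A)^2 := by nlinarith [mul_pos hα hα]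
    have h3 : s ≤ 2*α^2*r^2 - A := by
      calc s ≤ Real.sqrt ((2*α^2*r^2 - A)^2) := Real.sqrt_le_sqrt hsq
      _ = 2*α^2*r^2 - A := Real.sqrt_sq h2
    linarith
  · intro h
    nlinarith [mul_pos hα hα, hs2, hsnn]

theorem stmt1 (α : ℝ) (hα : 0 < α) (p : H) :
    dInf α p =
      Real.sqrt (((rho p) ^ 2 + Real.sqrt ((rho p) ^ 4 + 4 * α ^ 2 * p.2.2 ^ 2)) / (2 * α ^ 2)) := by
  obtain ⟨x, y, z⟩ := p
  have hrho2 : rho (x,y,z) ^ 2 = x^2 + y^2 := Real.sq_sqrt (by positivity)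
  have hrho4 : rho (x,y,z) ^ 4 = (x^2+y^2)^2 := by
    rw [show rho (x,y,z) ^ 4 = (rho (x,y,z)^2)^2 by ring, hrho2]
  rw [hrho2, hrho4]
  set A := x^2 + y^2 with hA'
  set s := Real.sqrt (A^2 + 4*α^2*z^2) with hs'
  set t₀ := (A + s)/(2*α^2) with ht₀'
  set R := Real.sqrt t₀ with hR'
  have hA : 0 ≤ A := by positivity
  have hsnn : 0 ≤ s := Real.sqrt_nonneg _
  have ht₀ : 0 ≤ t₀ := by positivity
  have hRnn : 0 ≤ R := Real.sqrt_nonneg _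
  have hR2 : R^2 = t₀ := Real.sq_sqrt ht₀
  have hSeq : {r : ℝ | 0 < r ∧ (x / r) ^ 2 + (y / r) ^ 2 + (z / r ^ 2) ^ 2 ≤ α ^ 2} =
      {r : ℝ | 0 < r ∧ R ≤ r} := by
    ext r
    simp only [Set.mem_setOf_eq]
    constructor
    · rintro ⟨hr, h⟩
      refine ⟨hr, ?_⟩
      rw [key α x y z r hα hr] at h
      calc R = Real.sqrt t₀ := hR'
      _ ≤ Real.sqrt (r^2) := Real.sqrt_le_sqrt h
      _ = r := Real.sqrt_sq hr.le
    · rintro ⟨hr, h⟩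
      refine ⟨hr, ?_⟩
      rw [key α x y z r hα hr]
      have h2 : R^2 ≤ r^2 := pow_le_pow_left₀ hRnn h 2
      rw [hR2] at h2
      exact h2
  have : dInf α (x,y,z) = sInf {r : ℝ | 0 < r ∧ R ≤ r} := by
    rw [dInf, ← hSeq]
  rw [this]
  have hbdd : BddBelow {r : ℝ | 0 < r ∧ R ≤ r} := ⟨R, fun r hr => hr.2⟩
  have hne : Set.Nonempty {r : ℝ | 0 < r ∧ R ≤ r} := ⟨R+1, by positivity, by linarith⟩
  apply le_antisymm
  · apply le_of_forall_pos_le_add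
    intro ε hε
    exact csInf_le hbdd ⟨by positivity, by linarith⟩
  · exact le_csInf hne fun r hr => hr.2
end
end

section
/- For 0 < α ≤ 2, the function d_{g,α}(p,q) := ‖p⁻¹·q‖_{g,α}, where ‖(x,y,z)‖_{g,α} = ((x²+y²)² + 4α²z²)^{1/4}, satisfies the triangle inequality and defines a left-invariant homogeneous distance on the Heisenberg group ℍ¹. -/
/-! Korányi's argument. With `ζ(x, y, t) = (x² + y²) + 2αt·i ∈ ℂ` one has `‖p‖_{g,α}² = |ζ(p)|`,
and `ζ(pq) = ζ(p) + ζ(q) + c(p, q)` where `|c(p, q)|² = 4(xu + yv)² + α²(xv - yu)²`. For `α ≤ 2`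
this is at most `4(x² + y²)(u² + v²) = 4ρ(p)²ρ(q)²`, so
`|ζ(pq)| ≤ ‖p‖² + ‖q‖² + 2‖p‖‖q‖ = (‖p‖ + ‖q‖)²`. -/

open Real

noncomputable section

/-- The gauge norm ‖·‖_{g,α}. -/
def gnorm (α : ℝ) (p : H) : ℝ :=
  ((p.1 ^ 2 + p.2.1 ^ 2) ^ 2 + 4 * α ^ 2 * p.2.2 ^ 2) ^ ((1 : ℝ) / 4)

/-- The gauge distance d_{g,α}. -/
def dg (α : ℝ) (p q : H) : ℝ := gnorm α (hmul (hinv p) q)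

lemma hinv_hmul_hinv (p q : H) : hinv (hmul (hinv p) q) = hmul (hinv q) p := by
  ext <;> simp only [hmul, hinv] <;> ring

lemma hmul_hinv_hmul_hinv_hmul (p q r : H) :
    hmul (hmul (hinv p) q) (hmul (hinv q) r) = hmul (hinv p) r := by
  ext <;> simp only [hmul, hinv] <;> ring

lemma hmul_hinv_hmul_hmul_left (g p q : H) :
    hmul (hinv (hmul g p)) (hmul g q) = hmul (hinv p) q := by
  ext <;> simp only [hmul, hinv] <;> ring

lemma hmul_hinv_eq_zero_iff (p q : H) : hmul (hinv p) q = 0 ↔ p = q := by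
  simp only [hmul, hinv, Prod.ext_iff, Prod.fst_zero, Prod.snd_zero]
  constructor
  · rintro ⟨h₁, h₂, h₃⟩
    have e₁ : p.1 = q.1 := by linarith
    have e₂ : p.2.1 = q.2.1 := by linarith
    rw [e₁, e₂] at h₃
    exact ⟨e₁, e₂, by linarith⟩
  · rintro ⟨e₁, e₂, e₃⟩
    rw [e₁, e₂, e₃]
    refine ⟨?_, ?_, ?_⟩ <;> ring

lemma hmul_hinv_hdil (l : ℝ) (p q : H) :
    hmul (hinv (hdil l p)) (hdil l q) = hdil l (hmul (hinv p) q) := by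
  ext <;> simp only [hmul, hinv, hdil] <;> ring

def gaugeC (α : ℝ) (p : H) : ℂ := ⟨p.1 ^ 2 + p.2.1 ^ 2, 2 * α * p.2.2⟩

lemma gnorm_eq_sqrt_norm_gaugeC (α : ℝ) (p : H) : gnorm α p = √‖gaugeC α p‖ := by
  have h : Complex.normSq (gaugeC α p) = (p.1 ^ 2 + p.2.1 ^ 2) ^ 2 + 4 * α ^ 2 * p.2.2 ^ 2 := by
    rw [gaugeC, Complex.normSq_mk]; ring
  rw [gnorm, Complex.norm_def, h, sqrt_eq_rpow, sqrt_eq_rpow, ← rpow_mul (by positivity)]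
  norm_num

lemma gnorm_nonneg (α : ℝ) (p : H) : 0 ≤ gnorm α p := by
  rw [gnorm_eq_sqrt_norm_gaugeC]; exact sqrt_nonneg _

lemma gnorm_sq (α : ℝ) (p : H) : gnorm α p ^ 2 = ‖gaugeC α p‖ := by
  rw [gnorm_eq_sqrt_norm_gaugeC, sq_sqrt (norm_nonneg _)]

lemma gnorm_eq_zero_iff {α : ℝ} (hα : α ≠ 0) (p : H) : gnorm α p = 0 ↔ p = 0 := by
  rw [gnorm_eq_sqrt_norm_gaugeC, sqrt_eq_zero (norm_nonneg _), norm_eq_zero, gaugeC,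
    Complex.ext_iff]
  simp only [Complex.zero_re, Complex.zero_im, Prod.ext_iff, Prod.fst_zero, Prod.snd_zero,
    mul_eq_zero, hα, two_ne_zero, false_or, ← sq_eq_zero_iff (a := p.1),
    ← sq_eq_zero_iff (a := p.2.1)]
  rw [add_eq_zero_iff_of_nonneg (sq_nonneg _) (sq_nonneg _), and_assoc]

lemma gnorm_hinv (α : ℝ) (p : H) : gnorm α (hinv p) = gnorm α p := by
  have h : gaugeC α (hinv p) = starRingEnd ℂ (gaugeC α p) := by
    apply Complex.ext <;> simp [gaugeC, hinv]
  rw [gnorm_eq_sqrt_norm_gaugeC, gnorm_eq_sqrt_norm_gaugeC, h, Complex.norm_conj]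

lemma gnorm_hdil (α l : ℝ) (p : H) : gnorm α (hdil l p) = |l| * gnorm α p := by
  have h : gaugeC α (hdil l p) = ((l ^ 2 : ℝ) : ℂ) * gaugeC α p := by
    apply Complex.ext <;>
      simp only [gaugeC, hdil, Complex.re_ofReal_mul, Complex.im_ofReal_mul] <;> ring
  rw [gnorm_eq_sqrt_norm_gaugeC, gnorm_eq_sqrt_norm_gaugeC, h, norm_mul, Complex.norm_real,
    Real.norm_eq_abs, abs_sq, sqrt_mul (sq_nonneg l), sqrt_sq_eq_abs]

lemma rho_le_gnorm (α : ℝ) (p : H) : rho p ≤ gnorm α p := by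
  rw [rho, gnorm_eq_sqrt_norm_gaugeC]
  exact sqrt_le_sqrt (Complex.re_le_norm (gaugeC α p))

def crossC (α : ℝ) (p q : H) : ℂ :=
  ⟨2 * (p.1 * q.1 + p.2.1 * q.2.1), α * (p.1 * q.2.1 - p.2.1 * q.1)⟩

lemma gaugeC_hmul (α : ℝ) (p q : H) :
    gaugeC α (hmul p q) = gaugeC α p + gaugeC α q + crossC α p q := by
  apply Complex.ext <;> simp only [gaugeC, crossC, hmul, Complex.add_re, Complex.add_im] <;> ring

lemma norm_crossC_le {α : ℝ} (hα : α ^ 2 ≤ 4) (p q : H) :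
    ‖crossC α p q‖ ≤ 2 * rho p * rho q := by
  have h : 2 * rho p * rho q = √(4 * ((p.1 ^ 2 + p.2.1 ^ 2) * (q.1 ^ 2 + q.2.1 ^ 2))) := by
    rw [sqrt_mul' _ (by positivity), sqrt_mul' _ (by positivity), rho, rho,
      show (4 : ℝ) = 2 ^ 2 by norm_num, sqrt_sq zero_le_two, mul_assoc]
  rw [h, Complex.norm_def, crossC, Complex.normSq_mk]
  apply sqrt_le_sqrt
  -- `α²(xv - yu)²` is absorbed by Lagrange's identity
  -- `(xu + yv)² + (xv - yu)² = (x² + y²)(u² + v²)`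
  nlinarith [mul_le_mul_of_nonneg_right hα (sq_nonneg (p.1 * q.2.1 - p.2.1 * q.1))]

lemma gnorm_hmul_le {α : ℝ} (hα : α ^ 2 ≤ 4) (p q : H) :
    gnorm α (hmul p q) ≤ gnorm α p + gnorm α q := by
  refine (sq_le_sq₀ (gnorm_nonneg α _) (add_nonneg (gnorm_nonneg α p) (gnorm_nonneg α q))).1 ?_
  have hρ : rho p * rho q ≤ gnorm α p * gnorm α q :=
    mul_le_mul (rho_le_gnorm α p) (rho_le_gnorm α q) (sqrt_nonneg _) (gnorm_nonneg α p)
  calc gnorm α (hmul p q) ^ 2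
      = ‖gaugeC α p + gaugeC α q + crossC α p q‖ := by rw [gnorm_sq, gaugeC_hmul]
    _ ≤ ‖gaugeC α p‖ + ‖gaugeC α q‖ + ‖crossC α p q‖ := norm_add₃_le
    _ ≤ gnorm α p ^ 2 + gnorm α q ^ 2 + 2 * rho p * rho q := by
        rw [gnorm_sq, gnorm_sq]; gcongr; exact norm_crossC_le hα p q
    _ ≤ (gnorm α p + gnorm α q) ^ 2 := by nlinarith

lemma dg_eq_zero_iff {α : ℝ} (hα : α ≠ 0) (p q : H) : dg α p q = 0 ↔ p = q := by
  rw [dg, gnorm_eq_zero_iff hα, hmul_hinv_eq_zero_iff]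

lemma dg_comm (α : ℝ) (p q : H) : dg α p q = dg α q p := by
  rw [dg, dg, ← gnorm_hinv, hinv_hmul_hinv]

lemma dg_triangle {α : ℝ} (hα : α ^ 2 ≤ 4) (p q r : H) :
    dg α p r ≤ dg α p q + dg α q r := by
  rw [dg, ← hmul_hinv_hmul_hinv_hmul p q r]
  exact gnorm_hmul_le hα _ _

lemma dg_hmul_left (α : ℝ) (g p q : H) : dg α (hmul g p) (hmul g q) = dg α p q := by
  rw [dg, hmul_hinv_hmul_hmul_left, dg]

lemma dg_hdil (α l : ℝ) (p q : H) : dg α (hdil l p) (hdil l q) = |l| * dg α p q := by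
  rw [dg, hmul_hinv_hdil, gnorm_hdil, dg]

theorem stmt2 (α : ℝ) (hα : 0 < α) (hα2 : α ≤ 2) :
    (∀ p q : H, dg α p q = 0 ↔ p = q) ∧
    (∀ p q : H, dg α p q = dg α q p) ∧
    (∀ p q r : H, dg α p r ≤ dg α p q + dg α q r) ∧
    (∀ g p q : H, dg α (hmul g p) (hmul g q) = dg α p q) ∧
    (∀ l : ℝ, 0 < l → ∀ p q : H, dg α (hdil l p) (hdil l q) = l * dg α p q) := by
  have hα_sq : α ^ 2 ≤ 4 := by nlinarith
  refine ⟨dg_eq_zero_iff hα.ne', dg_comm α, dg_triangle hα_sq, dg_hmul_left α, ?_⟩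
  intro l hl p q
  rw [dg_hdil, abs_of_pos hl]

end
end

section
/- Let (M,d) be a metric space. The distance d satisfies the Besicovitch Covering Property (BCP) with constant N if: for every bounded set A ⊂ M and every family ℬ of closed balls such that each point of A is the center of some ball of ℬ, there is a subfamily ℱ ⊂ ℬ covering A with multiplicity at most N. Prove: if BCP holds for d with constant N, then the Weak Besicovitch Covering Property holds with the same constant N, i.e. every finite family {B(x_i,r_i)}_{i=1}^k of closed balls with x_i ∉ B(x_j,r_j) for all i ≠ j and ⋂_i B(x_i,r_i) ≠ ∅ satisfies k ≤ N. -/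
open Metric

theorem stmt12 {M : Type*} [MetricSpace M] (N : ℕ)
    (bcp : ∀ A : Set M, Bornology.IsBounded A → ∀ r : M → ℝ, (∀ x ∈ A, 0 < r x) →
      ∃ F : Set M, F ⊆ A ∧ (∀ a ∈ A, ∃ x ∈ F, a ∈ closedBall x (r x)) ∧
        ∀ y : M, {x ∈ F | y ∈ closedBall x (r x)}.ncard ≤ N)
    (k : ℕ) (x : Fin k → M) (r : Fin k → ℝ) (hr : ∀ i, 0 < r i)
    (hsep : ∀ i j, i ≠ j → x i ∉ closedBall (x j) (r j))
    (hne : (⋂ i, closedBall (x i) (r i)).Nonempty) :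
    k ≤ N := by
  rcases hne with ⟨y, hy⟩
  simp only [Set.mem_iInter] at hy
  have hinj : Function.Injective x := by
    intro i j hij
    by_contra h
    exact hsep i j h (by rw [hij]; exact mem_closedBall_self (hr j).le)
  classical
  set r' : M → ℝ := fun m => if h : ∃ i, x i = m then r h.choose else 1 with hr'def
  have hr'x : ∀ i, r' (x i) = r i := by
    intro i
    have h : ∃ j, x j = x i := ⟨i, rfl⟩
    simp only [hr'def, dif_pos h]
    rw [hinj h.choose_spec]
  obtain ⟨F, hFA, hcov, hmult⟩ := bcp (Set.range x) ((Set.finite_range x).isBounded) r'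
    (by rintro _ ⟨i, rfl⟩; rw [hr'x]; exact hr i)
  have hFeq : F = Set.range x := by
    apply Set.Subset.antisymm hFA
    rintro _ ⟨i, rfl⟩
    obtain ⟨z, hzF, hz⟩ := hcov (x i) ⟨i, rfl⟩
    obtain ⟨j, rfl⟩ := hFA hzF
    rw [hr'x] at hz
    rcases eq_or_ne i j with h | h
    · subst h; exact hzF
    · exact absurd hz (hsep i j h)
  have hset : {m ∈ F | y ∈ closedBall m (r' m)} = Set.range x := by
    rw [hFeq]
    ext m
    constructor
    · exact fun h => h.1
    · rintro ⟨i, rfl⟩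
      exact ⟨⟨i, rfl⟩, by rw [hr'x]; exact hy i⟩
  have hm := hmult y
  rw [hset] at hm
  have : (Set.range x).ncard = k := by
    rw [Set.ncard_eq_toFinset_card' ]
    simp [Set.toFinset_range, Finset.card_image_of_injective _ hinj]
  omega
end

section
/- Let (M,d) be a metric space with an accumulation point. Then for every 0 < c < 1 there exists a distance d̄ on M with c·d ≤ d̄ ≤ d such that the Weak Besicovitch Covering Property fails for d̄: for every N ∈ ℕ there exists a finite family {B_{d̄}(x_i, r_i)}_{i=1}^{N+1} of closed d̄-balls with x_i ∉ B_{d̄}(x_j, r_j) for all i ≠ j and with nonempty common intersection. -/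
theorem stmt13 {M : Type*} [MetricSpace M]
    (hacc : ∃ xb : M, ∀ ε : ℝ, 0 < ε → ∃ y : M, y ≠ xb ∧ dist y xb < ε)
    (c : ℝ) (hc0 : 0 < c) (hc1 : c < 1) :
    ∃ dbar : M → M → ℝ,
      (∀ x y, c * dist x y ≤ dbar x y) ∧ (∀ x y, dbar x y ≤ dist x y) ∧
      (∀ x y, dbar x y = 0 ↔ x = y) ∧ (∀ x y, dbar x y = dbar y x) ∧
      (∀ x y z, dbar x z ≤ dbar x y + dbar y z) ∧
      (∀ N : ℕ, ∃ (x : Fin (N + 1) → M) (r : Fin (N + 1) → ℝ),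
        (∀ i, 0 < r i) ∧ (∀ i j, i ≠ j → r j < dbar (x i) (x j)) ∧
        ∃ y : M, ∀ i, dbar y (x i) ≤ r i) := by
  obtain ⟨xb, hxb⟩ := hacc
  refine ⟨fun x y => min (dist x y) (c * (dist x xb + dist y xb)), ?_, ?_, ?_, ?_, ?_, ?_⟩
  · intro x y
    refine le_min ?_ ?_
    · nlinarith [dist_nonneg (x := x) (y := y)]
    · have h : dist x y ≤ dist x xb + dist y xb := by
        simpa [dist_comm] using dist_triangle x xb y
      nlinarith
  · intro x y; exact min_le_left _ _
  · intro x y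
    constructor
    · intro h
      by_contra hne
      have hd : 0 < dist x y := dist_pos.2 hne
      have h2 : dist x y ≤ dist x xb + dist y xb := by
        simpa [dist_comm] using dist_triangle x xb y
      have h3 : 0 < min (dist x y) (c * (dist x xb + dist y xb)) :=
        lt_min hd (by nlinarith)
      beta_reduce at h
      rw [h] at h3; exact lt_irrefl _ h3
    · rintro rfl
      have h0 : (0 : ℝ) ≤ c * (dist x xb + dist x xb) := by positivity
      simp [dist_self, min_eq_left h0]
  · intro x y
    show min (dist x y) (c * (dist x xb + dist y xb)) =
      min (dist y x) (c * (dist y xb + dist x xb))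
    rw [dist_comm, add_comm]
  · intro x y z
    show min (dist x z) (c * (dist x xb + dist z xb)) ≤
      min (dist x y) (c * (dist x xb + dist y xb)) +
      min (dist y z) (c * (dist y xb + dist z xb))
    have h1 : min (dist x z) (c * (dist x xb + dist z xb)) ≤ dist x y + dist y z :=
      le_trans (min_le_left _ _) (dist_triangle x y z)
    have h2 : min (dist x z) (c * (dist x xb + dist z xb)) ≤
        dist x y + c * (dist y xb + dist z xb) := by
      refine le_trans (min_le_right _ _) ?_
      nlinarith [dist_triangle x y xb, dist_nonneg (x := x) (y := y)]
    have h3 : min (dist x z) (c * (dist x xb + dist z xb)) ≤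
        c * (dist x xb + dist y xb) + dist y z := by
      refine le_trans (min_le_right _ _) ?_
      have h := dist_triangle z y xb
      rw [dist_comm z y] at h
      nlinarith [dist_nonneg (x := y) (y := z)]
    have h4 : min (dist x z) (c * (dist x xb + dist z xb)) ≤
        c * (dist x xb + dist y xb) + c * (dist y xb + dist z xb) := by
      refine le_trans (min_le_right _ _) ?_
      nlinarith [dist_nonneg (x := y) (y := xb)]
    rcases min_cases (dist x y) (c * (dist x xb + dist y xb)) with ⟨e1, _⟩ | ⟨e1, _⟩ <;>
      rcases min_cases (dist y z) (c * (dist y xb + dist z xb)) with ⟨e2, _⟩ | ⟨e2, _⟩ <;>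
      rw [e1, e2]
    · exact h1
    · exact h2
    · exact h3
    · exact h4
  · intro N
    have hε0 : (0 : ℝ) < (1 - c) / 2 := by linarith
    obtain ⟨p0, hp0ne, _⟩ := hxb 1 one_pos
    have key : ∀ p : {p : M // p ≠ xb},
        ∃ q : {p : M // p ≠ xb}, dist q.1 xb < (1 - c) / 2 * dist p.1 xb := by
      rintro ⟨p, hp⟩
      have hdp : 0 < dist p xb := dist_pos.2 hp
      obtain ⟨q, hq, hq2⟩ := hxb ((1 - c) / 2 * dist p xb) (by positivity)
      exact ⟨⟨q, hq⟩, hq2⟩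
    choose f hf using key
    set u : ℕ → {p : M // p ≠ xb} := fun n => f^[n] ⟨p0, hp0ne⟩ with hudef
    have hu : ∀ n, dist (u (n + 1)).1 xb < (1 - c) / 2 * dist (u n).1 xb := by
      intro n
      have h : u (n + 1) = f (u n) := Function.iterate_succ_apply' f n _
      rw [h]; exact hf (u n)
    set t : ℕ → ℝ := fun n => dist (u n).1 xb with htdef
    have ht0 : ∀ n, 0 < t n := fun n => dist_pos.2 (u n).2
    have hdec : ∀ n, t (n + 1) < t n := by
      intro n
      have := hu n
      nlinarith [ht0 n]
    have hanti : ∀ i j : ℕ, i ≤ j → t j ≤ t i :=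
      fun i j h => antitone_nat_of_succ_le (fun n => (hdec n).le) h
    have hkey : ∀ i j : ℕ, i < j → t j < (1 - c) * t i := by
      intro i j hij
      calc t j ≤ t (i + 1) := hanti _ _ hij
        _ < (1 - c) / 2 * t i := hu i
        _ ≤ (1 - c) * t i := by nlinarith [(ht0 i).le]
    refine ⟨fun i => (u i.1).1, fun i => c * t i.1, ?_, ?_, ?_⟩
    · intro i; exact mul_pos hc0 (ht0 i.1)
    · intro i j hij
      show c * t j.1 < min (dist (u i.1).1 (u j.1).1)
        (c * (dist (u i.1).1 xb + dist (u j.1).1 xb))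
      have hij' : i.1 ≠ j.1 := fun h => hij (Fin.ext h)
      have habs : |t i.1 - t j.1| ≤ dist (u i.1).1 (u j.1).1 := abs_dist_sub_le _ _ _
      refine lt_min ?_ ?_
      · rcases lt_or_gt_of_ne hij' with h | h
        · have hk := hkey _ _ h
          have h2 : t j.1 ≤ t i.1 := hanti _ _ h.le
          have h3 : t i.1 - t j.1 ≤ dist (u i.1).1 (u j.1).1 :=
            le_trans (le_abs_self _) habs
          nlinarith [ht0 i.1, ht0 j.1]
        · have hk := hkey _ _ h
          have h3 : t j.1 - t i.1 ≤ dist (u i.1).1 (u j.1).1 := by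
            refine le_trans ?_ habs
            rw [← neg_sub]
            exact neg_le_abs _
          nlinarith [ht0 i.1, ht0 j.1]
      · have : (0 : ℝ) < t i.1 := ht0 i.1
        have he : dist (u i.1).1 xb = t i.1 := rfl
        have he2 : dist (u j.1).1 xb = t j.1 := rfl
        rw [he, he2]
        nlinarith
    · refine ⟨xb, fun i => ?_⟩
      show min (dist xb (u i.1).1) (c * (dist xb xb + dist (u i.1).1 xb)) ≤ c * t i.1
      simp only [dist_self, zero_add]
      exact min_le_right _ _
end

section
/- Let d be a homogeneous distance on ℍ¹ with closed unit ball B at the origin, and suppose there are sequences p_n^± = (x_n^±, 0, z_n^±) ∈ ∂B with z_n^± > 0, x_n^- < 0 < x_n^+, x_n^+ − x_n^- → 0, z_n^- > z_n^+ > 0, z_n^+ − z_n^- < −a(x_n^+ − x_n^-) for some a > 0, and {p : x_n^+ ≤ x_p ≤ x̄, y_p = 0, z_p > z_n^+} ⊂ ℍ¹ \ B for some x̄ > 0. Then the Weak Besicovitch Covering Property fails for d: for every N there exists a family of N+1 closed d-balls with nonempty common intersection such that no ball contains the center of another. -/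
open Real

noncomputable section

/-!
The balls `B(δ_t(p⁻¹), t)` with `p ∈ ∂B` all pass through `0`. Take `p = p_n^-`.
Left translating by `δ_t(p_n^-)` and rescaling by `1/t`, the center of a ball
`B(δ_s(p_m^-⁻¹), s)` lands at `p_n^- · δ_{s/t}(p_m^-⁻¹)`, which lies in the region
`x_n^+ ≤ x ≤ x̄`, `y = 0`, `z > z_n^+` outside `B` as soon as `ε = x_n^+ - x_n^-` is small
and `t` is of order `1/ε`: the `x`-shift `(s/t)|x_m^-|` is then at least `ε`, while the
`z`-shift `(s/t)² z_m^-` is of order `ε²`, below the drop `z_n^- - z_n^+ > aε`.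
So a new ball, larger than all previous ones, can always be added with its center outside
all previous balls and theirs outside it.
-/

open Filter Topology

theorem hmul_zero (p : H) : hmul p 0 = p := by
  simp [hmul]

theorem hmul_hinv (p : H) : hmul p (hinv p) = 0 := by
  ext <;> simp [hmul, hinv]; ring

theorem hinv_hmul (p : H) : hmul (hinv p) p = 0 := by
  ext <;> simp [hmul, hinv]; ring

theorem hdil_zero (l : ℝ) : hdil l 0 = 0 := by
  simp [hdil]

theorem hmul_hinv_hdil_hinv {t : ℝ} (ht : t ≠ 0) (s x z x' z' : ℝ) :
    hmul (hinv (hdil t (hinv (x, 0, z)))) (hdil s (hinv (x', 0, z'))) =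
      hdil t (x - s / t * x', 0, z - (s / t) ^ 2 * z') := by
  simp only [hmul, hinv, hdil, Prod.mk.injEq]
  refine ⟨by field_simp; ring, by ring, by field_simp; ring⟩

section Distance

variable {d : H → H → ℝ}

theorem dist_eq_dist_zero_hmul_hinv (hleft : ∀ g p q : H, d (hmul g p) (hmul g q) = d p q)
    (p q : H) : d p q = d 0 (hmul (hinv p) q) := by
  rw [← hleft (hinv p) p q, hinv_hmul]

theorem dist_zero_hinv (hsymm : ∀ p q : H, d p q = d q p)
    (hleft : ∀ g p q : H, d (hmul g p) (hmul g q) = d p q) (p : H) : d 0 (hinv p) = d 0 p := by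
  rw [← hleft p 0 (hinv p), hmul_zero, hmul_hinv, hsymm]

theorem dist_zero_hdil (hhom : ∀ l : ℝ, 0 < l → ∀ p q : H, d (hdil l p) (hdil l q) = l * d p q)
    {l : ℝ} (hl : 0 < l) (p : H) : d 0 (hdil l p) = l * d 0 p := by
  rw [← hhom l hl 0 p, hdil_zero]

theorem dist_zero_hdil_hinv (hsymm : ∀ p q : H, d p q = d q p)
    (hleft : ∀ g p q : H, d (hmul g p) (hmul g q) = d p q)
    (hhom : ∀ l : ℝ, 0 < l → ∀ p q : H, d (hdil l p) (hdil l q) = l * d p q)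
    {t : ℝ} (ht : 0 < t) (p : H) : d 0 (hdil t (hinv p)) = t * d 0 p := by
  rw [dist_zero_hdil hhom ht, dist_zero_hinv hsymm hleft]

theorem lt_dist_hdil_hinv (hleft : ∀ g p q : H, d (hmul g p) (hmul g q) = d p q)
    (hhom : ∀ l : ℝ, 0 < l → ∀ p q : H, d (hdil l p) (hdil l q) = l * d p q)
    {t s x z x' z' : ℝ} (ht : 0 < t) (hfar : 1 < d 0 (x - s / t * x', 0, z - (s / t) ^ 2 * z')) :
    t < d (hdil t (hinv (x, 0, z))) (hdil s (hinv (x', 0, z'))) := by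
  rw [dist_eq_dist_zero_hmul_hinv hleft, hmul_hinv_hdil_hinv ht.ne', dist_zero_hdil hhom ht]
  exact lt_mul_of_one_lt_right ht hfar

end Distance

theorem exists_separated_family {α : Type*} (P : α → Prop) (r : α → ℝ) (D : α → α → ℝ)
    (hD : ∀ a b, D a b = D b a) (h₀ : ∃ a, P a)
    (hext : ∀ k (f : Fin (k + 1) → α), (∀ i, P (f i)) →
      ∃ b, P b ∧ ∀ i, r (f i) ≤ r b ∧ r b < D b (f i)) (N : ℕ) :
    ∃ f : Fin (N + 1) → α, (∀ i, P (f i)) ∧ ∀ i j, i ≠ j → r (f j) < D (f i) (f j) := by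
  induction N with
  | zero =>
    obtain ⟨a, ha⟩ := h₀
    exact ⟨fun _ => a, fun _ => ha, fun i j hij => (hij (Subsingleton.elim (α := Fin 1) i j)).elim⟩
  | succ N ih =>
    obtain ⟨f, hfP, hfD⟩ := ih
    obtain ⟨b, hbP, hb⟩ := hext N f hfP
    refine ⟨Fin.cons b f, Fin.cases hbP hfP, ?_⟩
    intro i j hij
    cases i using Fin.cases with
    | zero =>
      cases j using Fin.cases with
      | zero => exact absurd rfl hij
      | succ j => exact (hb j).1.trans_lt (hb j).2
    | succ i =>
      cases j using Fin.cases with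
      | zero => simpa only [Fin.cons_zero, Fin.cons_succ, hD] using (hb i).2
      | succ j => exact hfD i j (fun h => hij (congrArg Fin.succ h))

theorem eventually_exists_scale {ι : Type*} [Finite ι] [Nonempty ι] {a : ℝ} (ha : 0 < a)
    (s X z : ι → ℝ) (hs : ∀ j, 0 < s j) (hX : ∀ j, 0 < X j) (hz : ∀ j, 0 < z j) :
    ∀ᶠ ε in 𝓝[>] 0, ∃ t, ∀ j, s j ≤ t ∧ ε ≤ s j / t * X j ∧ (s j / t) ^ 2 * z j ≤ a * ε := by
  obtain ⟨jM, hM⟩ := Finite.exists_min fun j => s j * X j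
  obtain ⟨jZ, hZ⟩ := Finite.exists_max fun j => s j ^ 2 * z j
  obtain ⟨jR, hR⟩ := Finite.exists_max s
  set M := s jM * X jM
  set Z := s jZ ^ 2 * z jZ
  have hM₀ : 0 < M := mul_pos (hs jM) (hX jM)
  have hZ₀ : 0 < Z := mul_pos (pow_pos (hs jZ) 2) (hz jZ)
  have hR₀ := hs jR
  filter_upwards [Ioo_mem_nhdsGT (by positivity : (0 : ℝ) < min (a * M ^ 2 / Z) (M / s jR))]
    with ε ⟨hε, hεδ⟩
  have hεZ : ε * Z ≤ a * M ^ 2 := (le_div_iff₀ hZ₀).1 (hεδ.le.trans (min_le_left _ _))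
  have hεR : ε * s jR ≤ M := (le_div_iff₀ hR₀).1 (hεδ.le.trans (min_le_right _ _))
  -- with `t = M / ε` the ratio `s j / t` is `s j * ε / M`
  refine ⟨M / ε, fun j => ⟨?_, ?_, ?_⟩⟩
  · rw [le_div_iff₀ hε]
    nlinarith [hR j]
  · rw [div_div_eq_mul_div, div_mul_eq_mul_div, le_div_iff₀ hM₀]
    nlinarith [hM j]
  · rw [div_div_eq_mul_div, div_pow, div_mul_eq_mul_div, div_le_iff₀ (by positivity)]
    calc (s j * ε) ^ 2 * z j = (s j ^ 2 * z j) * ε ^ 2 := by ring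
      _ ≤ Z * ε ^ 2 := mul_le_mul_of_nonneg_right (hZ j) (sq_nonneg ε)
      _ = (ε * Z) * ε := by ring
      _ ≤ (a * M ^ 2) * ε := mul_le_mul_of_nonneg_right hεZ hε.le
      _ = a * ε * M ^ 2 := by ring

theorem exists_far_ball {d : H → H → ℝ}
    (hleft : ∀ g p q : H, d (hmul g p) (hmul g q) = d p q)
    (hhom : ∀ l : ℝ, 0 < l → ∀ p q : H, d (hdil l p) (hdil l q) = l * d p q)
    {a xbar : ℝ} (ha : 0 < a) (hxbar : 0 < xbar) {xp xm zp zm : ℕ → ℝ}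
    (hsign : ∀ n, xm n < 0 ∧ 0 < xp n)
    (hgap : Tendsto (fun n => xp n - xm n) atTop (𝓝 0))
    (hz : ∀ n, zm n > zp n ∧ zp n > 0)
    (hslope : ∀ n, zp n - zm n < -a * (xp n - xm n))
    (hout : ∀ n, ∀ q : H, xp n ≤ q.1 → q.1 ≤ xbar → q.2.1 = 0 → zp n < q.2.2 → 1 < d 0 q)
    {ι : Type*} [Finite ι] [Nonempty ι] (m : ι → ℕ) (s : ι → ℝ) (hs : ∀ j, 0 < s j)
    (hm : ∀ j, -xm (m j) ≤ xbar) :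
    ∃ n t, 0 < t ∧ -xm n ≤ xbar ∧ ∀ j, s j ≤ t ∧
      t < d (hdil t (hinv (xm n, 0, zm n))) (hdil (s j) (hinv (xm (m j), 0, zm (m j)))) := by
  have hgap' : Tendsto (fun n => xp n - xm n) atTop (𝓝[>] 0) :=
    tendsto_nhdsWithin_iff.2 ⟨hgap, Eventually.of_forall fun n => sub_pos.2 ((hsign n).1.trans (hsign n).2)⟩
  have hscale := eventually_exists_scale ha s (fun j => -xm (m j)) (fun j => zm (m j)) hs
    (fun j => neg_pos.2 (hsign (m j)).1) (fun j => (hz (m j)).2.trans (hz (m j)).1)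
  obtain ⟨n, ⟨t, ht⟩, hn⟩ :=
    ((hgap'.eventually hscale).and (hgap.eventually (gt_mem_nhds hxbar))).exists
  obtain ⟨j₀⟩ := ‹Nonempty ι›
  have ht₀ : 0 < t := (hs j₀).trans_le (ht j₀).1
  refine ⟨n, t, ht₀, by linarith [hsign n], fun j => ⟨(ht j).1, ?_⟩⟩
  obtain ⟨hst, hx, hz'⟩ := ht j
  have hratio : s j / t * -xm (m j) ≤ -xm (m j) :=
    mul_le_of_le_one_left (by linarith [hsign (m j)]) ((div_le_one ht₀).2 hst)
  refine lt_dist_hdil_hinv hleft hhom ht₀ (hout n _ ?_ ?_ rfl ?_)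
  · linarith
  · linarith [hm j, hsign n]
  · linarith [hslope n]

theorem stmt16_general (d : H → H → ℝ)
    (hsymm : ∀ p q : H, d p q = d q p)
    (hleft : ∀ g p q : H, d (hmul g p) (hmul g q) = d p q)
    (hhom : ∀ l : ℝ, 0 < l → ∀ p q : H, d (hdil l p) (hdil l q) = l * d p q)
    (a xbar : ℝ) (ha : 0 < a) (hxbar : 0 < xbar)
    (xp xm zp zm : ℕ → ℝ)
    (hsphere_m : ∀ n, d 0 ((xm n, 0, zm n) : H) = 1)
    (hsign : ∀ n, xm n < 0 ∧ 0 < xp n)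
    (hgap : Filter.Tendsto (fun n => xp n - xm n) Filter.atTop (nhds 0))
    (hz : ∀ n, zm n > zp n ∧ zp n > 0)
    (hslope : ∀ n, zp n - zm n < -a * (xp n - xm n))
    (hout : ∀ n, ∀ q : H, xp n ≤ q.1 → q.1 ≤ xbar → q.2.1 = 0 → zp n < q.2.2 → 1 < d 0 q) :
    ∀ N : ℕ, ∃ (x : Fin (N + 1) → H) (r : Fin (N + 1) → ℝ),
      (∀ i, 0 < r i) ∧ (∀ i j, i ≠ j → r j < d (x i) (x j)) ∧ ∃ y : H, ∀ i, d y (x i) ≤ r i := by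
  intro N
  let center : ℕ × ℝ → H := fun b => hdil b.2 (hinv (xm b.1, 0, zm b.1))
  obtain ⟨f, hfP, hfD⟩ := exists_separated_family
    (fun b : ℕ × ℝ => 0 < b.2 ∧ -xm b.1 ≤ xbar) Prod.snd (fun b c => d (center b) (center c))
    (fun _ _ => hsymm _ _)
    (by
      obtain ⟨n, hn⟩ := (hgap.eventually (gt_mem_nhds hxbar)).exists
      exact ⟨(n, 1), one_pos, by linarith [hsign n]⟩)
    (fun _ f hf => by
      obtain ⟨n, t, ht, hn, hfar⟩ := exists_far_ball hleft hhom ha hxbar hsign hgap hz hslope hout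
        (fun i => (f i).1) (fun i => (f i).2) (fun i => (hf i).1) (fun i => (hf i).2)
      exact ⟨(n, t), ⟨ht, hn⟩, hfar⟩)
    N
  refine ⟨fun i => center (f i), fun i => (f i).2, fun i => (hfP i).1, hfD, 0, fun i => ?_⟩
  rw [dist_zero_hdil_hinv hsymm hleft hhom (hfP i).1, hsphere_m, mul_one]

theorem stmt16 (d : H → H → ℝ)
    (hzero : ∀ p q : H, d p q = 0 ↔ p = q)
    (hsymm : ∀ p q : H, d p q = d q p)
    (htri : ∀ p q r : H, d p r ≤ d p q + d q r)
    (hleft : ∀ g p q : H, d (hmul g p) (hmul g q) = d p q)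
    (hhom : ∀ l : ℝ, 0 < l → ∀ p q : H, d (hdil l p) (hdil l q) = l * d p q)
    (a xbar : ℝ) (ha : 0 < a) (hxbar : 0 < xbar)
    (xp xm zp zm : ℕ → ℝ)
    (hsphere_p : ∀ n, d 0 ((xp n, 0, zp n) : H) = 1)
    (hsphere_m : ∀ n, d 0 ((xm n, 0, zm n) : H) = 1)
    (hsign : ∀ n, xm n < 0 ∧ 0 < xp n)
    (hgap : Filter.Tendsto (fun n => xp n - xm n) Filter.atTop (nhds 0))
    (hz : ∀ n, zm n > zp n ∧ zp n > 0)
    (hslope : ∀ n, zp n - zm n < -a * (xp n - xm n))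
    (hout : ∀ n, ∀ q : H, xp n ≤ q.1 → q.1 ≤ xbar → q.2.1 = 0 → zp n < q.2.2 → 1 < d 0 q) :
    ∀ N : ℕ, ∃ (x : Fin (N + 1) → H) (r : Fin (N + 1) → ℝ),
      (∀ i, 0 < r i) ∧ (∀ i j, i ≠ j → r j < d (x i) (x j)) ∧ ∃ y : H, ∀ i, d y (x i) ≤ r i :=
  stmt16_general d hsymm hleft hhom a xbar ha hxbar xp xm zp zm hsphere_m hsign hgap hz hslope hout
end
end
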